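/- arXiv:1207.2605 — 2 statements merged into one kernel-verified Lean document; each statement's English description precedes it below -/
import Mathlib

section
/- For all integers d ≥ 0, the sum over all pairs of nonnegative integers (m,n) with m + 2n = d of ((m+3)/105) · C(m+5,5) · C(n+4,4) · C(n+m+7,4) equals C(15+d, 15), where C(a,b) denotes the binomial coefficient. -/
/-!
Over `ℚ` the summand is a polynomial in `(m, n)`, and along the line `m = d - 2n` its partial
sums have a closed form: with `v = d - 2N` (the value of `m` at the first omitted term),
`∑_{n < N} = C(d + 15, 15) - C(v + 7, 7) · defect(N, v)` for an explicit polynomial of degree 8,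
which is checked by induction on `N`. Once `N = ⌊d/2⌋ + 1` we have `v ∈ {-2, -1}`, so
`C(v + 7, 7) = 0` and the partial sum is the full sum.
-/

open Finset Nat

theorem Ring.choose_eq_prod_div {K : Type*} [Field K] [CharZero K] (x : K) (k : ℕ) :
    Ring.choose x k = (∏ i ∈ range k, (x - i)) / k ! := by
  rw [Ring.choose_eq_smul, ← Polynomial.aeval_eq_smeval, Polynomial.aeval_def,
    ← Polynomial.eval_map, descPochhammer_map, descPochhammer_eval_eq_prod_range, smul_eq_mul,
    inv_mul_eq_div]

theorem sum_filter_add_two_mul_eq {M : Type*} [AddCommMonoid M] (d : ℕ) (f : ℕ → ℕ → M) :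
    ∑ p ∈ (range (d + 1) ×ˢ range (d + 1)).filter (fun p => p.1 + 2 * p.2 = d), f p.1 p.2 =
      ∑ n ∈ range (d / 2 + 1), f (d - 2 * n) n := by
  refine sum_nbij' Prod.snd (fun n => (d - 2 * n, n)) ?_ ?_ ?_ (fun _ _ => rfl) ?_
  all_goals simp only [mem_filter, mem_product, mem_range, Prod.forall, Prod.mk.injEq, and_true]
  iterate 3 omega
  intro m n h
  rw [show d - 2 * n = m by omega]

noncomputable def summand (m n : ℚ) : ℚ :=
  (m + 3) / 105 * Ring.choose (m + 5) 5 * Ring.choose (n + 4) 4 * Ring.choose (n + m + 7) 4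

/-- Found by computer algebra; `defect 0 v = C(v + 15, 15) / C(v + 7, 7)`. -/
def defect (N v : ℚ) : ℚ :=
  ((259459200 + 188204400 * v + 59354028 * v ^ 2 + 10630508 * v ^ 3 + 1182769 * v ^ 4
      + 83720 * v ^ 5 + 3682 * v ^ 6 + 92 * v ^ 7 + v ^ 8)
    + (737605440 + 506520360 * v + 142935800 * v ^ 2 + 21363790 * v ^ 3 + 1827280 * v ^ 4
      + 90860 * v ^ 5 + 2520 * v ^ 6 + 30 * v ^ 7) * N
    + (844220520 + 528299240 * v + 130596340 * v ^ 2 + 16083480 * v ^ 3 + 1023960 * v ^ 4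
      + 31920 * v ^ 5 + 420 * v ^ 6) * N ^ 2
    + (517476960 + 283608780 * v + 58917040 * v ^ 2 + 5691140 * v ^ 3 + 247520 * v ^ 4
      + 3640 * v ^ 5) * N ^ 3
    + (188017830 + 85914920 * v + 14014000 * v ^ 2 + 950040 * v ^ 3 + 21840 * v ^ 4) * N ^ 4
    + (41801760 + 14834820 * v + 1681680 * v ^ 2 + 60060 * v ^ 3) * N ^ 5
    + (5585580 + 1361360 * v + 80080 * v ^ 2) * N ^ 6
    + (411840 + 51480 * v) * N ^ 7
    + 12870 * N ^ 8) / 259459200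

theorem sum_range_summand (d : ℚ) (N : ℕ) :
    ∑ n ∈ range N, summand (d - 2 * n) n =
      Ring.choose (d + 15) 15 - Ring.choose (d - 2 * N + 7) 7 * defect N (d - 2 * N) := by
  induction N with
  | zero =>
    simp only [range_zero, sum_empty, Nat.cast_zero, mul_zero, sub_zero, defect,
      Ring.choose_eq_prod_div, prod_range_succ, Nat.factorial]
    push_cast
    ring
  | succ N ih =>
    rw [sum_range_succ, ih]
    simp only [summand, defect, Ring.choose_eq_prod_div, prod_range_succ, prod_range_zero,
      Nat.factorial]
    push_cast
    ring

/-- For all `d ≥ 0`, the sum over pairs `(m,n)` of nonnegative integers with `m + 2n = d`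
of `((m+3)/105) * C(m+5,5) * C(n+4,4) * C(n+m+7,4)` equals `C(15+d,15)`. -/
theorem stmt_0 (d : ℕ) :
    ∑ p ∈ (Finset.range (d + 1) ×ˢ Finset.range (d + 1)).filter
        (fun p => p.1 + 2 * p.2 = d),
      ((p.1 + 3 : ℚ) / 105) * (Nat.choose (p.1 + 5) 5) * (Nat.choose (p.2 + 4) 4) *
        (Nat.choose (p.2 + p.1 + 7) 4)
    = Nat.choose (15 + d) 15 := by
  rw [sum_filter_add_two_mul_eq d (fun m n => ((m + 3 : ℚ) / 105) * (Nat.choose (m + 5) 5) *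
    (Nat.choose (n + 4) 4) * (Nat.choose (n + m + 7) 4))]
  have hterm : ∀ n ∈ range (d / 2 + 1), ((d - 2 * n : ℕ) + 3 : ℚ) / 105 *
      (Nat.choose (d - 2 * n + 5) 5) * (Nat.choose (n + 4) 4) *
      (Nat.choose (n + (d - 2 * n) + 7) 4) = summand (d - 2 * n) n := by
    intro n hn
    have h2n : 2 * n ≤ d := by rw [mem_range] at hn; omega
    simp only [summand, ← Ring.choose_natCast]
    push_cast [Nat.cast_sub h2n]
    rfl
  have hboundary : Ring.choose ((d : ℚ) - 2 * ↑(d / 2 + 1) + 7) 7 = 0 := by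
    have hv : (d : ℚ) - 2 * ↑(d / 2 + 1) + 7 = ↑(d % 2 + 5) := by
      have hd : ((2 * (d / 2) + d % 2 : ℕ) : ℚ) = d := by exact_mod_cast Nat.div_add_mod d 2
      push_cast at hd ⊢
      linarith
    rw [hv, Ring.choose_natCast, Nat.choose_eq_zero_of_lt (by omega), Nat.cast_zero]
  rw [sum_congr rfl hterm, sum_range_summand, hboundary, zero_mul, sub_zero, add_comm,
    ← Ring.choose_natCast]
  push_cast
  rfl
end

section
/- Let B be the even-cardinality subsets of {1,...,5}. A pair (I,J) ∈ B × B satisfies |IΔJ| = 4 if and only if its equivalence class under (I,J) ∼ (K,L) ⟺ 1_I + 1_J = 1_K + 1_L has exactly 8 elements, and in that case the class is {(a₁,A₁),(a₂,A₂),(a₃,A₃),(a₄,A₄),(A₄,a₄),(A₃,a₃),(A₂,a₂),(A₁,a₁)} where for each i, a_i ∩ A_i = I ∩ J, a_i ∪ A_i = I ∪ J, and a_i Δ A_i = I Δ J. -/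
/-!
A pair `(K, L)` lies in the class of `(I, J)` iff `K ∩ L = I ∩ J` and `K ∆ L = I ∆ J`. With
`C = I ∩ J` and `D = I ∆ J`, such pairs of even sets correspond to the subsets `S = K ∩ D` of `D`
with `|S| + |C|` even, via `S ↦ (C ∪ S, C ∪ (D \ S))`. For nonempty `D` exactly half of the
`2 ^ |D|` subsets of `D` have a prescribed parity (as `∑ S ⊆ D, (-1) ^ |S| = 0`), so the class has
`2 ^ (|D| - 1)` elements, which is `8` exactly when `|D| = 4`.
-/

/-- The set `B` of even-cardinality subsets of `{1,...,5}`. -/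
def evenB : Finset (Finset (Fin 5)) := Finset.univ.filter (fun I => Even I.card)

def ind (I : Finset (Fin 5)) (x : Fin 5) : ℕ := if x ∈ I then 1 else 0

/-- The equivalence class of a pair `(I,J) ∈ B × B` under the relation
`(I,J) ∼ (K,L) ⟺ 1_I + 1_J = 1_K + 1_L`. -/
def classOf (p : Finset (Fin 5) × Finset (Fin 5)) :
    Finset (Finset (Fin 5) × Finset (Fin 5)) :=
  (evenB ×ˢ evenB).filter (fun r => ∀ x : Fin 5, ind r.1 x + ind r.2 x = ind p.1 x + ind p.2 x)

open Finset

section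
variable {α : Type*}

theorem card_symmDiff_add_two_mul_card_inter [DecidableEq α] (s t : Finset α) :
    #(symmDiff s t) + 2 * #(s ∩ t) = #s + #t := by
  have hsub : s ∩ t ⊆ s ∪ t := inter_subset_left.trans subset_union_left
  rw [symmDiff_eq_sup_sdiff_inf, sup_eq_union, inf_eq_inter, card_sdiff_of_subset hsub]
  have := card_le_card hsub
  have := card_union_add_card_inter s t
  omega

theorem even_card_symmDiff [DecidableEq α] {s t : Finset α} (hs : Even #s) (ht : Even #t) :
    Even #(symmDiff s t) := by
  have := card_symmDiff_add_two_mul_card_inter s t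
  rw [Nat.even_iff] at *
  omega

theorem two_mul_card_powerset_filter_even_add {D : Finset α} (hD : D.Nonempty) (c : ℕ) :
    2 * #{S ∈ D.powerset | Even (#S + c)} = 2 ^ #D := by
  have hsum : ∑ S ∈ D.powerset, (-1 : ℤ) ^ (#S + c) = 0 := by
    simp_rw [pow_add, ← sum_mul, sum_powerset_neg_one_pow_card_of_nonempty hD, zero_mul]
  rw [← sum_filter_add_sum_filter_not _ (fun S => Even (#S + c)),
    sum_congr rfl fun S hS => (mem_filter.1 hS).2.neg_one_pow,
    sum_congr rfl fun S hS => (Nat.not_even_iff_odd.1 (mem_filter.1 hS).2).neg_one_pow] at hsum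
  have htotal := card_filter_add_card_filter_not (s := D.powerset) (fun S => Even (#S + c))
  rw [card_powerset] at htotal
  simp only [sum_const, nsmul_eq_mul, mul_one, mul_neg] at hsum
  omega

theorem card_pairs_of_inter_symmDiff_eq [DecidableEq α] [Fintype α] {C D : Finset α}
    (hCD : Disjoint C D) (hD : Even #D) :
    #{p : Finset α × Finset α |
        Even #p.1 ∧ Even #p.2 ∧ p.1 ∩ p.2 = C ∧ symmDiff p.1 p.2 = D} =
      #{S ∈ D.powerset | Even (#S + #C)} := by
  have hC : ∀ x, x ∈ C → x ∉ D := fun x h => disjoint_left.1 hCD h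
  refine card_nbij' (fun p => p.1 ∩ D) (fun S => (C ∪ S, C ∪ (D \ S))) ?_ ?_ ?_ ?_
  · rintro ⟨K, L⟩ hp
    obtain ⟨hK, -, rfl, rfl⟩ := by simpa using hp
    refine mem_filter.2 ⟨mem_powerset.2 inter_subset_right, ?_⟩
    have : K ∩ symmDiff K L = K \ L := by
      ext; simp only [mem_inter, mem_sdiff, mem_symmDiff]; tauto
    dsimp only
    rwa [this, card_sdiff_add_card_inter]
  · intro S hS
    obtain ⟨hSD, hparity⟩ := by simpa using hS
    simp only [coe_filter, mem_univ, true_and, Set.mem_ofPred_eq]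
    refine ⟨?_, ?_, ?_, ?_⟩
    · rwa [card_union_of_disjoint (hCD.mono_right hSD), add_comm]
    · have := card_le_card hSD
      rw [card_union_of_disjoint (hCD.mono_right sdiff_subset), card_sdiff_of_subset hSD]
      rw [Nat.even_iff] at *
      omega
    · ext x; have := hC x; have := @hSD x; simp only [mem_inter, mem_union, mem_sdiff]; tauto
    · ext x; have := hC x; have := @hSD x; simp only [mem_union, mem_sdiff, mem_symmDiff]; tauto
  · rintro ⟨K, L⟩ hp
    obtain ⟨-, -, rfl, rfl⟩ := by simpa using hp
    ext x <;> simp only [mem_inter, mem_union, mem_sdiff, mem_symmDiff] <;> tauto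
  · intro S hS
    obtain ⟨hSD, -⟩ := by simpa using hS
    ext x; have := hC x; have := @hSD x; simp only [mem_inter, mem_union]; tauto

end

theorem ind_add_ind_eq_iff (K L I J : Finset (Fin 5)) (x : Fin 5) :
    ind K x + ind L x = ind I x + ind J x ↔
      (x ∈ K ∩ L ↔ x ∈ I ∩ J) ∧ (x ∈ symmDiff K L ↔ x ∈ symmDiff I J) := by
  simp only [ind, mem_inter, mem_symmDiff]
  split_ifs <;> simp_all

theorem mem_classOf {I J : Finset (Fin 5)} {p : Finset (Fin 5) × Finset (Fin 5)} :
    p ∈ classOf (I, J) ↔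
      Even #p.1 ∧ Even #p.2 ∧ p.1 ∩ p.2 = I ∩ J ∧ symmDiff p.1 p.2 = symmDiff I J := by
  simp only [classOf, evenB, mem_filter, mem_product, mem_univ, true_and, ind_add_ind_eq_iff,
    forall_and, ← Finset.ext_iff, and_assoc]

theorem card_classOf {I J : Finset (Fin 5)} (hI : Even #I) (hJ : Even #J) :
    #(classOf (I, J)) = #{S ∈ (symmDiff I J).powerset | Even (#S + #(I ∩ J))} := by
  rw [← card_pairs_of_inter_symmDiff_eq (C := I ∩ J) (disjoint_symmDiff_inf I J).symm
    (even_card_symmDiff hI hJ)]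
  congr 1
  ext p
  simp [mem_classOf]

/-- For even subsets `I, J` of `{1,...,5}`: `|I Δ J| = 4` iff the equivalence class of
`(I,J)` has exactly 8 elements; in that case, every pair `(K,L)` in the class satisfies
`K ∩ L = I ∩ J`, `K ∪ L = I ∪ J`, `K Δ L = I Δ J`, and the class is closed under
swapping the two coordinates (so it consists of pairs `(aᵢ, Aᵢ)` and `(Aᵢ, aᵢ)`). -/
theorem stmt_6 (I J : Finset (Fin 5)) (hI : Even I.card) (hJ : Even J.card) :
    ((symmDiff I J).card = 4 ↔ (classOf (I, J)).card = 8) ∧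
    ((symmDiff I J).card = 4 →
      (∀ p ∈ classOf (I, J),
        p.1 ∩ p.2 = I ∩ J ∧ p.1 ∪ p.2 = I ∪ J ∧ symmDiff p.1 p.2 = symmDiff I J) ∧
      (∀ p ∈ classOf (I, J), (p.2, p.1) ∈ classOf (I, J))) := by
  refine ⟨?_, fun _ => ⟨fun p hp => ?_, fun p hp => ?_⟩⟩
  · rw [card_classOf hI hJ]
    rcases (symmDiff I J).eq_empty_or_nonempty with hD | hD
    · have := card_filter_le (symmDiff I J).powerset fun S => Even (#S + #(I ∩ J))
      simp only [hD, powerset_empty, card_singleton, card_empty] at this ⊢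
      omega
    · have h := two_mul_card_powerset_filter_even_add hD #(I ∩ J)
      constructor
      · intro h4
        rw [h4] at h
        omega
      · intro h8
        rw [h8] at h
        exact Nat.pow_right_injective le_rfl (h.symm.trans (by norm_num) : 2 ^ _ = 2 ^ 4)
  · obtain ⟨-, -, hinter, hsymmDiff⟩ := mem_classOf.1 hp
    refine ⟨hinter, ?_, hsymmDiff⟩
    rw [← sup_eq_union, ← sup_eq_union, ← symmDiff_sup_inf, ← symmDiff_sup_inf I J, inf_eq_inter,
      inf_eq_inter, hinter, hsymmDiff]
  · obtain ⟨h1, h2, hinter, hsymmDiff⟩ := mem_classOf.1 hp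
    exact mem_classOf.2 ⟨h2, h1, inter_comm p.2 p.1 ▸ hinter, symmDiff_comm p.2 p.1 ▸ hsymmDiff⟩
end
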